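/- For v > v_RP = (1-2λ)/(κ-1), the shock position V(v) = (√(v/κ) + √((1-2λ)(κ-1)/κ))² lies in the rarefaction region: v/κ ≤ V(v) ≤ vκ. -/
import Mathlib


theorem shock_in_rarefaction (κ lam v : ℝ) (hκ : 1 < κ)
    (hlam0 : 0 ≤ lam) (hlam1 : lam < 1 / 2)
    (hv : (1 - 2 * lam) / (κ - 1) < v) :
    v / κ ≤ (Real.sqrt (v / κ) + Real.sqrt ((1 - 2 * lam) * (κ - 1) / κ)) ^ 2 ∧
    (Real.sqrt (v / κ) + Real.sqrt ((1 - 2 * lam) * (κ - 1) / κ)) ^ 2 ≤ v * κ := by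
  have hκ0 : (0:ℝ) < κ := by linarith
  have hκ1 : (0:ℝ) < κ - 1 := by linarith
  have h2l : (0:ℝ) < 1 - 2 * lam := by linarith
  have hv0 : 0 < v := lt_trans (div_pos h2l hκ1) hv
  have hkey : 1 - 2 * lam < v * (κ - 1) := by
    have := (div_lt_iff₀ hκ1).mp hv
    linarith
  have hA : 0 ≤ v / κ := le_of_lt (div_pos hv0 hκ0)
  have hB : 0 ≤ (1 - 2 * lam) * (κ - 1) / κ := by positivity
  have hsA := Real.sq_sqrt hA
  have hsB := Real.sq_sqrt hB
  have hnA := Real.sqrt_nonneg (v / κ)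
  have hnB := Real.sqrt_nonneg ((1 - 2 * lam) * (κ - 1) / κ)
  constructor
  · nlinarith [mul_nonneg hnA hnB]
  · have hmul : Real.sqrt (v / κ) * Real.sqrt ((1 - 2 * lam) * (κ - 1) / κ)
        = Real.sqrt ((v / κ) * ((1 - 2 * lam) * (κ - 1) / κ)) :=
      (Real.sqrt_mul hA _).symm
    have hle : Real.sqrt ((v / κ) * ((1 - 2 * lam) * (κ - 1) / κ)) ≤ v * (κ - 1) / κ := by
      have h1 : (v / κ) * ((1 - 2 * lam) * (κ - 1) / κ) ≤ (v * (κ - 1) / κ) ^ 2 := by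
        rw [div_mul_div_comm, div_pow, div_le_div_iff₀ (by positivity) (by positivity)]
        have hc : (1 - 2 * lam) * (κ - 1) < v * (κ - 1) ^ 2 := by nlinarith
        nlinarith [mul_lt_mul_of_pos_left hc (show (0:ℝ) < v * κ ^ 2 by positivity)]
      calc Real.sqrt ((v / κ) * ((1 - 2 * lam) * (κ - 1) / κ))
          ≤ Real.sqrt ((v * (κ - 1) / κ) ^ 2) := Real.sqrt_le_sqrt h1
        _ = v * (κ - 1) / κ := Real.sqrt_sq (by positivity)
    have hmul' : Real.sqrt (v / κ) * Real.sqrt ((1 - 2 * lam) * (κ - 1) / κ)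
        ≤ v * (κ - 1) / κ := hmul ▸ hle
    have hfin : v / κ + (1 - 2 * lam) * (κ - 1) / κ + 2 * (v * (κ - 1) / κ) ≤ v * κ := by
      have heq : v / κ + (1 - 2 * lam) * (κ - 1) / κ + 2 * (v * (κ - 1) / κ)
          = (v + (1 - 2 * lam) * (κ - 1) + 2 * (v * (κ - 1))) / κ := by ring
      rw [heq, div_le_iff₀ hκ0]
      nlinarith
    nlinarith
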